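/- Let B be the EABP. An element z = Σ_{i=1}^n x_i e_i^(f) + Σ_{j=1}^ν y_j e_j^(m) belongs to ann B if and only if for every j = 1,…,ν: Σ_{i=1}^n P^(f)_{ij,k} x_i = 0 for k = 1,…,n and Σ_{i=1}^n P^(m)_{ij,l} x_i = 0 for l = 1,…,ν; and for every i = 1,…,n: Σ_{j=1}^ν P^(f)_{ij,k} y_j = 0 for k = 1,…,n and Σ_{j=1}^ν P^(m)_{ij,l} y_j = 0 for l = 1,…,ν. Moreover, every z ∈ ann B satisfies X(z) = 0 and Y(z) = 0. -/

import Mathlib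

/-! Each coordinate of `z t` is linear in `t = (a, b)`:
`∑ j, b j * (∑ i, P i j k * z.1 i) + ∑ i, a i * (∑ j, P i j k * z.2 j)` with `P` equal to `Pf` or
`Pm`, so `z ∈ ann B` iff all the inner sums vanish (test against basis vectors). Summing the `Pf`
conditions over `k` and using `∑ k, Pf i j k = 1` gives `X(z) = Y(z) = 0`. -/

open scoped BigOperators

/-- Multiplication of the evolution algebra of a bisexual population (EABP) on
`ℝ^{n+ν} = (Fin n → ℝ) × (Fin ν → ℝ)`. -/
noncomputable def bmul {n ν : ℕ} (Pf : Fin n → Fin ν → Fin n → ℝ)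
    (Pm : Fin n → Fin ν → Fin ν → ℝ)
    (z t : (Fin n → ℝ) × (Fin ν → ℝ)) : (Fin n → ℝ) × (Fin ν → ℝ) :=
  (fun k => (1 / 2) * ∑ i, ∑ j, Pf i j k * (z.1 i * t.2 j + t.1 i * z.2 j),
   fun l => (1 / 2) * ∑ i, ∑ j, Pm i j l * (z.1 i * t.2 j + t.1 i * z.2 j))

section FiniteSums

variable {ι κ R : Type*} [Fintype ι] [Fintype κ] [CommSemiring R]

theorem sum_sum_mul_mul_add_mul_mul (Q : ι → κ → R) (x a : ι → R) (y b : κ → R) :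
    ∑ i, ∑ j, Q i j * (x i * b j + a i * y j) =
      ∑ j, b j * ∑ i, Q i j * x i + ∑ i, a i * ∑ j, Q i j * y j := by
  simp only [Finset.mul_sum, mul_add, Finset.sum_add_distrib]
  rw [Finset.sum_comm (f := fun i j => Q i j * (x i * b j))]
  congr 1 <;> refine Finset.sum_congr rfl fun _ _ => Finset.sum_congr rfl fun _ _ => by ring

theorem forall_sum_sum_mul_mul_add_mul_mul_eq_zero_iff [DecidableEq ι] [DecidableEq κ]
    (Q : ι → κ → R) (x : ι → R) (y : κ → R) :
    (∀ (a : ι → R) (b : κ → R), ∑ i, ∑ j, Q i j * (x i * b j + a i * y j) = 0) ↔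
      (∀ j, ∑ i, Q i j * x i = 0) ∧ ∀ i, ∑ j, Q i j * y j = 0 := by
  simp only [sum_sum_mul_mul_add_mul_mul]
  constructor
  · intro h
    refine ⟨fun j => ?_, fun i => ?_⟩
    · simpa [Pi.single_apply] using h 0 (Pi.single j 1)
    · simpa [Pi.single_apply] using h (Pi.single i 1) 0
  · rintro ⟨hx, hy⟩ a b
    simp [hx, hy]

theorem sum_eq_zero_of_sum_eq_one_of_sum_mul_eq_zero {Q : ι → κ → R} {x : ι → R} (hQ : ∀ i, ∑ k, Q i k = 1)
    (hx : ∀ k, ∑ i, Q i k * x i = 0) : ∑ i, x i = 0 :=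
  calc ∑ i, x i = ∑ i, (∑ k, Q i k) * x i := by simp only [hQ, one_mul]
    _ = ∑ k, ∑ i, Q i k * x i := by simp only [Finset.sum_mul]; exact Finset.sum_comm
    _ = 0 := by simp only [hx, Finset.sum_const_zero]

end FiniteSums

theorem bmul_eq_zero_iff {n ν : ℕ} (Pf : Fin n → Fin ν → Fin n → ℝ)
    (Pm : Fin n → Fin ν → Fin ν → ℝ) (z t : (Fin n → ℝ) × (Fin ν → ℝ)) :
    bmul Pf Pm z t = 0 ↔
      (∀ k, ∑ i, ∑ j, Pf i j k * (z.1 i * t.2 j + t.1 i * z.2 j) = 0) ∧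
        ∀ l, ∑ i, ∑ j, Pm i j l * (z.1 i * t.2 j + t.1 i * z.2 j) = 0 := by
  simp [bmul, Prod.ext_iff, funext_iff]

theorem forall_bmul_eq_zero_iff {n ν : ℕ} (Pf : Fin n → Fin ν → Fin n → ℝ)
    (Pm : Fin n → Fin ν → Fin ν → ℝ) (z : (Fin n → ℝ) × (Fin ν → ℝ)) :
    (∀ t, bmul Pf Pm z t = 0) ↔
      (∀ j : Fin ν, (∀ k : Fin n, ∑ i, Pf i j k * z.1 i = 0) ∧
                     (∀ l : Fin ν, ∑ i, Pm i j l * z.1 i = 0)) ∧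
       (∀ i : Fin n, (∀ k : Fin n, ∑ j, Pf i j k * z.2 j = 0) ∧
                     (∀ l : Fin ν, ∑ j, Pm i j l * z.2 j = 0)) := by
  have slice {m : ℕ} (P : Fin n → Fin ν → Fin m → ℝ) :
      (∀ (a : Fin n → ℝ) (b : Fin ν → ℝ) k, ∑ i, ∑ j, P i j k * (z.1 i * b j + a i * z.2 j) = 0) ↔
        ∀ k, (∀ j, ∑ i, P i j k * z.1 i = 0) ∧ ∀ i, ∑ j, P i j k * z.2 j = 0 := by
    simp only [← forall_sum_sum_mul_mul_add_mul_mul_eq_zero_iff]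
    exact ⟨fun h k a b => h a b k, fun h a b k => h k a b⟩
  simp only [bmul_eq_zero_iff, Prod.forall, forall_and, slice]
  tauto

theorem stmt_17_general (n ν : ℕ) (hn : 0 < n) (hν : 0 < ν)
    (Pf : Fin n → Fin ν → Fin n → ℝ) (Pm : Fin n → Fin ν → Fin ν → ℝ)
    (hPf1 : ∀ i k, ∑ j, Pf i k j = 1)
    (z : (Fin n → ℝ) × (Fin ν → ℝ)) :
    ((∀ t : (Fin n → ℝ) × (Fin ν → ℝ), bmul Pf Pm z t = 0)
      ↔
      ((∀ j : Fin ν, (∀ k : Fin n, ∑ i, Pf i j k * z.1 i = 0) ∧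
                     (∀ l : Fin ν, ∑ i, Pm i j l * z.1 i = 0)) ∧
       (∀ i : Fin n, (∀ k : Fin n, ∑ j, Pf i j k * z.2 j = 0) ∧
                     (∀ l : Fin ν, ∑ j, Pm i j l * z.2 j = 0))))
    ∧
    ((∀ t : (Fin n → ℝ) × (Fin ν → ℝ), bmul Pf Pm z t = 0) →
      (∑ i, z.1 i = 0 ∧ ∑ j, z.2 j = 0)) := by
  refine ⟨forall_bmul_eq_zero_iff Pf Pm z, fun h => ?_⟩
  obtain ⟨hX, hY⟩ := (forall_bmul_eq_zero_iff Pf Pm z).mp h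
  obtain ⟨i⟩ := Fin.pos_iff_nonempty.mp hn
  obtain ⟨j⟩ := Fin.pos_iff_nonempty.mp hν
  exact ⟨sum_eq_zero_of_sum_eq_one_of_sum_mul_eq_zero (hPf1 · j) (hX j).1,
    sum_eq_zero_of_sum_eq_one_of_sum_mul_eq_zero (hPf1 i) (hY i).1⟩

/-- Characterization of the annihilator of the EABP 𝓑, and the fact that every element of
ann 𝓑 satisfies X(z) = 0 and Y(z) = 0. -/
theorem stmt_17 (n ν : ℕ) (hn : 0 < n) (hν : 0 < ν)
    (Pf : Fin n → Fin ν → Fin n → ℝ) (Pm : Fin n → Fin ν → Fin ν → ℝ)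
    (hPf0 : ∀ i k j, 0 ≤ Pf i k j) (hPf1 : ∀ i k, ∑ j, Pf i k j = 1)
    (hPm0 : ∀ i k l, 0 ≤ Pm i k l) (hPm1 : ∀ i k, ∑ l, Pm i k l = 1)
    (z : (Fin n → ℝ) × (Fin ν → ℝ)) :
    ((∀ t : (Fin n → ℝ) × (Fin ν → ℝ), bmul Pf Pm z t = 0)
      ↔
      ((∀ j : Fin ν, (∀ k : Fin n, ∑ i, Pf i j k * z.1 i = 0) ∧
                     (∀ l : Fin ν, ∑ i, Pm i j l * z.1 i = 0)) ∧
       (∀ i : Fin n, (∀ k : Fin n, ∑ j, Pf i j k * z.2 j = 0) ∧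
                     (∀ l : Fin ν, ∑ j, Pm i j l * z.2 j = 0))))
    ∧
    ((∀ t : (Fin n → ℝ) × (Fin ν → ℝ), bmul Pf Pm z t = 0) →
      (∑ i, z.1 i = 0 ∧ ∑ j, z.2 j = 0)) :=
  stmt_17_general n ν hn hν Pf Pm hPf1 z
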